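/- For every integer i ≥ 0 and every v ∈ (1/N, 1) with N > e², one has ∫_{1/N}^1 (log(e²·N·s))^i / (s·√(s+v)) ds ≤ (2^{i+1}/√v) · i! · Σ_{j=0}^{i+1} (log(e²·N·v))^j / (2^j · j!). -/

import Mathlib

/-!
Write `L s = log (e² N s)`, which is `≥ 2` on `[1/N, 1]` and has `L' = 1/s`, and split the
integral at `v`. On `[1/N, v]` use `√(s + v) ≥ √v`: the integral of `L^i / s` is
`L^(i+1) / (i+1)`, which gives the top term of the sum. On `[v, 1]` use `√(s + v) ≥ √s`:
with `E n y = ∑_{j<n} y^j / j!` one has `E' (n+1) = E n` and `E (i+1) - E i = y^i / i!`, so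
`-2^(i+1) i! E (i+1) (L s / 2) / √s` is an antiderivative of `L^i / s^(3/2)`; it is `≤ 0`
at `s = 1`, which gives the remaining terms.
-/

open Real Finset Set

noncomputable def expPartialSum (n : ℕ) (x : ℝ) : ℝ :=
  ∑ j ∈ range n, x ^ j / j.factorial

theorem expPartialSum_succ (n : ℕ) (x : ℝ) :
    expPartialSum (n + 1) x = expPartialSum n x + x ^ n / n.factorial :=
  sum_range_succ _ _

theorem expPartialSum_nonneg {x : ℝ} (hx : 0 ≤ x) (n : ℕ) : 0 ≤ expPartialSum n x :=
  sum_nonneg fun _ _ => by positivity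

theorem sum_pow_div_two_pow_mul_factorial (n : ℕ) (x : ℝ) :
    ∑ j ∈ range n, x ^ j / (2 ^ j * j.factorial) = expPartialSum n (x / 2) := by
  simp only [expPartialSum, div_pow, div_div]

theorem hasDerivAt_expPartialSum_succ (n : ℕ) (x : ℝ) :
    HasDerivAt (expPartialSum (n + 1)) (expPartialSum n x) x := by
  induction n with
  | zero =>
    have h_one : expPartialSum 1 = fun _ => 1 := by ext; simp [expPartialSum]
    simpa [h_one, expPartialSum] using hasDerivAt_const x (1 : ℝ)
  | succ n ih =>
    rw [funext (expPartialSum_succ (n + 1))]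
    refine (ih.add ((hasDerivAt_pow (n + 1) x).div_const _)).congr_deriv ?_
    rw [expPartialSum_succ, Nat.factorial_succ]
    push_cast
    field_simp

theorem hasDerivAt_log_const_mul {c t : ℝ} (hc : c ≠ 0) (ht : t ≠ 0) :
    HasDerivAt (fun s => log (c * s)) t⁻¹ t := by
  refine (((hasDerivAt_id t).const_mul c).log (mul_ne_zero hc ht)).congr_deriv ?_
  simp only [id]
  field_simp

theorem log_const_mul_nonneg {c a s : ℝ} (ha : 0 < a) (hca : 1 ≤ c * a) (has : a ≤ s) :
    0 ≤ log (c * s) := by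
  have hc : 0 < c := pos_of_mul_pos_left (one_pos.trans_le hca) ha.le
  exact log_nonneg (hca.trans (mul_le_mul_of_nonneg_left has hc.le))

theorem intervalIntegrable_of_continuousOn_Ioi {f : ℝ → ℝ} {a b : ℝ}
    (hf : ContinuousOn f (Ioi 0)) (ha : 0 < a) (hb : 0 < b) :
    IntervalIntegrable f MeasureTheory.volume a b :=
  (hf.mono fun _ hx => (lt_min ha hb).trans_le hx.1).intervalIntegrable

section

variable {c : ℝ} (i : ℕ)

theorem hasDerivAt_expPartialSum_log_const_mul_div_sqrt {t : ℝ} (hc : c ≠ 0) (ht : 0 < t) :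
    HasDerivAt
      (fun s => -(2 ^ (i + 1) * i.factorial * expPartialSum (i + 1) (log (c * s) / 2) / √s))
      (log (c * t) ^ i / (t * √t)) t := by
  have hE := (hasDerivAt_expPartialSum_succ i _).comp t
    ((hasDerivAt_log_const_mul hc ht.ne').div_const 2)
  have hq := (hE.div (hasDerivAt_sqrt ht.ne') (sqrt_pos.2 ht).ne').const_mul
    (2 ^ (i + 1) * (i.factorial : ℝ))
  refine (hq.neg.congr_deriv ?_).congr_of_eventuallyEq
    (.of_forall fun s => by simp [mul_div_assoc])
  have hst : √t ^ 2 = t := sq_sqrt ht.le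
  have hs : 0 < √t := sqrt_pos.2 ht
  rw [Function.comp_apply, expPartialSum_succ, div_pow, hst]
  field_simp
  rw [hst]
  ring

theorem continuousOn_log_const_mul_pow_div_mul_sqrt_add (hc : c ≠ 0) {w : ℝ} (hw : 0 ≤ w) :
    ContinuousOn (fun s => log (c * s) ^ i / (s * √(s + w))) (Ioi 0) := by
  fun_prop (disch := (intro x (hx : 0 < x); positivity))

theorem continuousOn_log_const_mul_pow_div_mul_sqrt (hc : c ≠ 0) :
    ContinuousOn (fun s => log (c * s) ^ i / (s * √s)) (Ioi 0) := by
  simpa using continuousOn_log_const_mul_pow_div_mul_sqrt_add i hc le_rfl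

theorem continuousOn_log_const_mul_pow_div (hc : c ≠ 0) :
    ContinuousOn (fun s => log (c * s) ^ i / s) (Ioi 0) := by
  fun_prop (disch := (intro x (hx : 0 < x); positivity))

theorem integral_log_const_mul_pow_div (hc : c ≠ 0) {a b : ℝ} (ha : 0 < a) (hb : 0 < b) :
    ∫ s in a..b, log (c * s) ^ i / s =
      (log (c * b) ^ (i + 1) - log (c * a) ^ (i + 1)) / (i + 1) := by
  rw [sub_div]
  refine intervalIntegral.integral_eq_sub_of_hasDerivAt
    (f := fun s => log (c * s) ^ (i + 1) / (i + 1)) (fun x hx => ?_)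
    (intervalIntegrable_of_continuousOn_Ioi (continuousOn_log_const_mul_pow_div i hc) ha hb)
  have hx : 0 < x := (lt_min ha hb).trans_le hx.1
  refine (((hasDerivAt_log_const_mul hc hx.ne').pow (i + 1)).div_const _).congr_deriv ?_
  push_cast
  field_simp

theorem integral_log_const_mul_pow_div_mul_sqrt (hc : c ≠ 0) {a b : ℝ} (ha : 0 < a)
    (hb : 0 < b) :
    ∫ s in a..b, log (c * s) ^ i / (s * √s) =
      2 ^ (i + 1) * i.factorial * expPartialSum (i + 1) (log (c * a) / 2) / √a -
      2 ^ (i + 1) * i.factorial * expPartialSum (i + 1) (log (c * b) / 2) / √b := by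
  rw [intervalIntegral.integral_eq_sub_of_hasDerivAt
    (fun x hx => hasDerivAt_expPartialSum_log_const_mul_div_sqrt i hc
      ((lt_min ha hb).trans_le hx.1))
    (intervalIntegrable_of_continuousOn_Ioi (continuousOn_log_const_mul_pow_div_mul_sqrt i hc)
      ha hb)]
  ring

theorem integral_log_const_mul_pow_div_mul_sqrt_add_le_log_pow_succ {a b w : ℝ} (ha : 0 < a)
    (hca : 1 ≤ c * a) (hab : a ≤ b) (hw : 0 < w) :
    ∫ s in a..b, log (c * s) ^ i / (s * √(s + w)) ≤
      log (c * b) ^ (i + 1) / ((i + 1) * √w) := by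
  have hc : c ≠ 0 := (pos_of_mul_pos_left (one_pos.trans_le hca) ha.le).ne'
  have hb : 0 < b := ha.trans_le hab
  calc ∫ s in a..b, log (c * s) ^ i / (s * √(s + w))
      ≤ ∫ s in a..b, (√w)⁻¹ * (log (c * s) ^ i / s) := by
        refine intervalIntegral.integral_mono_on hab
          (intervalIntegrable_of_continuousOn_Ioi
            (continuousOn_log_const_mul_pow_div_mul_sqrt_add i hc hw.le) ha hb)
          (intervalIntegrable_of_continuousOn_Ioi
            (continuousOn_const.mul (continuousOn_log_const_mul_pow_div i hc)) ha hb)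
          fun s ⟨has, _⟩ => ?_
        have hs : 0 < s := ha.trans_le has
        have hL := pow_nonneg (log_const_mul_nonneg ha hca has) i
        rw [inv_mul_eq_div, div_div]
        exact div_le_div_of_nonneg_left hL (by positivity)
          (mul_le_mul_of_nonneg_left (sqrt_le_sqrt (by linarith)) hs.le)
    _ = (log (c * b) ^ (i + 1) - log (c * a) ^ (i + 1)) / ((i + 1) * √w) := by
        rw [intervalIntegral.integral_const_mul, integral_log_const_mul_pow_div i hc ha hb]
        field_simp
    _ ≤ log (c * b) ^ (i + 1) / ((i + 1) * √w) := by
        have := pow_nonneg (log_const_mul_nonneg ha hca le_rfl) (i + 1)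
        gcongr
        linarith

theorem integral_log_const_mul_pow_div_mul_sqrt_add_le_expPartialSum {a b w : ℝ} (ha : 0 < a)
    (hca : 1 ≤ c * a) (hab : a ≤ b) (hw : 0 ≤ w) :
    ∫ s in a..b, log (c * s) ^ i / (s * √(s + w)) ≤
      2 ^ (i + 1) * i.factorial * expPartialSum (i + 1) (log (c * a) / 2) / √a := by
  have hc : c ≠ 0 := (pos_of_mul_pos_left (one_pos.trans_le hca) ha.le).ne'
  have hb : 0 < b := ha.trans_le hab
  calc ∫ s in a..b, log (c * s) ^ i / (s * √(s + w))
      ≤ ∫ s in a..b, log (c * s) ^ i / (s * √s) := by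
        refine intervalIntegral.integral_mono_on hab
          (intervalIntegrable_of_continuousOn_Ioi
            (continuousOn_log_const_mul_pow_div_mul_sqrt_add i hc hw) ha hb)
          (intervalIntegrable_of_continuousOn_Ioi
            (continuousOn_log_const_mul_pow_div_mul_sqrt i hc) ha hb)
          fun s ⟨has, _⟩ => ?_
        have hs : 0 < s := ha.trans_le has
        have hL := pow_nonneg (log_const_mul_nonneg ha hca has) i
        exact div_le_div_of_nonneg_left hL (by positivity)
          (mul_le_mul_of_nonneg_left (sqrt_le_sqrt (by linarith)) hs.le)
    _ ≤ _ := by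
        rw [integral_log_const_mul_pow_div_mul_sqrt i hc ha hb, sub_le_self_iff]
        have := log_const_mul_nonneg ha hca hab
        have := expPartialSum_nonneg (by positivity : 0 ≤ log (c * b) / 2) (i + 1)
        positivity

end

theorem stmt_14 (i : ℕ) (N : ℝ) (hN : Real.exp 2 < N) (v : ℝ) (hv : v ∈ Set.Ioo (1 / N) 1) :
    ∫ s in (1 / N)..1, (Real.log (Real.exp 2 * N * s)) ^ i / (s * Real.sqrt (s + v))
      ≤ (2 ^ (i + 1) / Real.sqrt v) * (Nat.factorial i : ℝ) *
        ∑ j ∈ Finset.range (i + 2),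
          (Real.log (Real.exp 2 * N * v)) ^ j / (2 ^ j * (Nat.factorial j : ℝ)) := by
  obtain ⟨hNv, hv1⟩ := hv
  have hN0 : 0 < N := (exp_pos 2).trans hN
  have hN' : 0 < 1 / N := by positivity
  have hv0 : 0 < v := hN'.trans hNv
  have hcN : 1 ≤ exp 2 * N * (1 / N) := by
    rw [show exp 2 * N * (1 / N) = exp 2 by field_simp]
    exact one_le_exp zero_le_two
  have hcv : 1 ≤ exp 2 * N * v := hcN.trans (by gcongr)
  have hf := continuousOn_log_const_mul_pow_div_mul_sqrt_add (c := exp 2 * N) i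
    (by positivity) hv0.le
  rw [← intervalIntegral.integral_add_adjacent_intervals
    (intervalIntegrable_of_continuousOn_Ioi hf hN' hv0)
    (intervalIntegrable_of_continuousOn_Ioi hf hv0 one_pos),
    sum_pow_div_two_pow_mul_factorial, expPartialSum_succ]
  calc _ ≤ log (exp 2 * N * v) ^ (i + 1) / ((i + 1) * √v) +
        2 ^ (i + 1) * i.factorial * expPartialSum (i + 1) (log (exp 2 * N * v) / 2) / √v :=
      add_le_add
        (integral_log_const_mul_pow_div_mul_sqrt_add_le_log_pow_succ i hN' hcN hNv.le hv0)
        (integral_log_const_mul_pow_div_mul_sqrt_add_le_expPartialSum i hv0 hcv hv1.le hv0.le)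
    _ = _ := by
      rw [Nat.factorial_succ, div_pow]
      push_cast
      field_simp
      ring
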